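/- If G is a finite uniformly generated group, then the Frattini subgroup Φ(G) is trivial. -/

import Mathlib

/-- A chain `⊥ = c 0 < c 1 < ⋯ < c n = ⊤` of subgroups is *unrefinable* if each
`c i` is maximal in `c (i+1)` (i.e. consecutive terms form a covering pair). -/
def IsUnrefinableChain {G : Type*} [Group G] {n : ℕ} (c : Fin (n + 1) → Subgroup G) : Prop :=
  c 0 = ⊥ ∧ c (Fin.last n) = ⊤ ∧ ∀ i : Fin n, c i.castSucc ⋖ c i.succ

/-- The length `ℓ(G)`: the maximal length of an unrefinable chain of subgroups. -/
noncomputable def groupLength (G : Type*) [Group G] : ℕ :=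
  sSup {n | ∃ c : Fin (n + 1) → Subgroup G, IsUnrefinableChain c}

/-- The depth `λ(G)`: the minimal length of an unrefinable chain of subgroups. -/
noncomputable def groupDepth (G : Type*) [Group G] : ℕ :=
  sInf {n | ∃ c : Fin (n + 1) → Subgroup G, IsUnrefinableChain c}

/-- `d(G)`: the minimal number of generators of `G`. -/
noncomputable def minGen (G : Type*) [Group G] : ℕ :=
  sInf {n | ∃ S : Finset G, S.card = n ∧ Subgroup.closure (S : Set G) = ⊤}

/-- `m(G)`: the maximal size of an independent generating set of `G`. -/
noncomputable def maxIndep (G : Type*) [Group G] : ℕ :=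
  sSup {n | ∃ S : Finset G, S.card = n ∧ Subgroup.closure (S : Set G) = ⊤ ∧
    ∀ a ∈ S, Subgroup.closure ((S : Set G) \ {a}) < ⊤}

/-- Given a tuple `x : Fin d → G`, the chain of subgroups
`⟨⟩ ≤ ⟨x 0⟩ ≤ ⟨x 0, x 1⟩ ≤ ⋯ ≤ ⟨x 0, …, x (d-1)⟩`. -/
def partialClosure {G : Type*} [Group G] {d : ℕ} (x : Fin d → G) (i : Fin (d + 1)) :
    Subgroup G :=
  Subgroup.closure (x '' {j | (j : ℕ) < (i : ℕ)})

/-- `G` is *`d`-uniformly generated* if strictly ascending chains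
`1 < ⟨x 1⟩ < ⋯ < ⟨x 1, …, x d⟩` exist, and every such chain ends at `G`. -/
def DUnifGen (G : Type*) [Group G] (d : ℕ) : Prop :=
  (∃ x : Fin d → G, StrictMono (partialClosure x)) ∧
  ∀ x : Fin d → G, StrictMono (partialClosure x) → Subgroup.closure (Set.range x) = ⊤

/-- `G` is *uniformly generated* if it is `d(G)`-uniformly generated. -/
def UniformlyGenerated (G : Type*) [Group G] : Prop :=
  DUnifGen G (minGen G)

/-- `G` is elementary abelian: isomorphic to `(C_p)^k` for some prime `p`. -/
def IsElementaryAbelian (G : Type*) [Group G] : Prop :=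
  ∃ (p k : ℕ), p.Prime ∧ Nonempty (G ≃* (Fin k → Multiplicative (ZMod p)))

/-- `G` is supersolvable: it has a normal series (all terms normal in `G`)
with cyclic factors (each step is obtained by adjoining a single element). -/
def IsSupersolvableGroup (G : Type*) [Group G] : Prop :=
  ∃ (n : ℕ) (c : Fin (n + 1) → Subgroup G),
    c 0 = ⊥ ∧ c (Fin.last n) = ⊤ ∧ Monotone c ∧ (∀ i, (c i).Normal) ∧
    ∀ i : Fin n, ∃ g : G, c i.succ = c i.castSucc ⊔ Subgroup.zpowers g

/-- `G` is isomorphic to `(C_p)^{k} ⋊ C_q` where `C_q` acts by a nontrivial scalar: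
expressed internally via a normal elementary abelian `p`-subgroup `N`, an element `g`
of order `q` complementing it, whose conjugation action raises every element of `N`
to a fixed power `c` which is a nontrivial scalar of multiplicative order `q` mod `p`. -/
def IsScalarExtension (G : Type*) [Group G] : Prop :=
  ∃ (p q : ℕ), p.Prime ∧ q.Prime ∧
    ∃ (N : Subgroup G) (g : G) (c : ℕ),
      N.Normal ∧ (∀ a ∈ N, ∀ b ∈ N, a * b = b * a) ∧ (∀ a ∈ N, a ^ p = 1) ∧
      orderOf g = q ∧
      N ⊔ Subgroup.zpowers g = ⊤ ∧ N ⊓ Subgroup.zpowers g = ⊥ ∧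
      (∀ n ∈ N, g * n * g⁻¹ = n ^ c) ∧
      c % p ≠ 1 % p ∧ c ^ q % p = 1 % p

/-!
Suppose `1 ≠ g ∈ Φ(G)` and put `x₁ = g`. Fewer than `d(G)` elements generate a proper subgroup,
so the chain `⟨x₁⟩ < ⟨x₁, x₂⟩ < ⋯` can be extended greedily up to length `d(G)`. By uniform
generation `x₁, …, x_d` generate `G`, and since `g` is a non-generator, so do the `d(G) - 1`
elements other than `g`, contradicting the minimality of `d(G)`.
-/

open Subgroup

section
variable {G : Type*} [Group G]

theorem minGen_le_card {S : Finset G} (hS : closure (S : Set G) = ⊤) : minGen G ≤ S.card :=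
  Nat.sInf_le ⟨S, rfl, hS⟩

theorem minGen_le_of_closure_range_eq_top {n : ℕ} {x : Fin n → G}
    (hx : closure (Set.range x) = ⊤) : minGen G ≤ n := by
  classical
  calc minGen G ≤ (Finset.univ.image x).card := minGen_le_card (by simpa using hx)
    _ ≤ n := Finset.card_image_le.trans (by simp)

theorem minGen_pos [Finite G] [Nontrivial G] : 0 < minGen G := by
  have := Fintype.ofFinite G
  obtain ⟨S, hcard, hS⟩ : minGen G ∈ {n | ∃ S : Finset G, S.card = n ∧ closure (S : Set G) = ⊤} :=
    Nat.sInf_mem ⟨_, Finset.univ, rfl, by simp⟩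
  refine Nat.pos_of_ne_zero fun h0 => ?_
  rw [h0, Finset.card_eq_zero] at hcard
  subst hcard
  simp at hS

theorem closure_diff_singleton_eq_top_of_mem_frattini [IsCoatomic (Subgroup G)] {s : Set G}
    {g : G} (hs : closure s = ⊤) (hg : g ∈ frattini G) : closure (s \ {g}) = ⊤ := by
  refine frattini_nongenerating (top_le_iff.mp ?_)
  calc ⊤ = closure s := hs.symm
    _ ≤ closure (s \ {g} ∪ {g}) := closure_mono (by simp)
    _ ≤ closure (s \ {g}) ⊔ frattini G := by
      rw [Subgroup.closure_union]
      exact sup_le_sup_left ((closure_le _).2 (by simpa using hg)) _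

theorem minGen_lt_of_mem_frattini [IsCoatomic (Subgroup G)] {n : ℕ} {x : Fin n → G}
    (hx : closure (Set.range x) = ⊤) (i : Fin n) (hi : x i ∈ frattini G) : minGen G < n := by
  classical
  have hgen : closure (((Finset.univ.erase i).image x : Finset G) : Set G) = ⊤ := by
    refine top_le_iff.1 <|
      (closure_diff_singleton_eq_top_of_mem_frattini hx hi).ge.trans (closure_mono ?_)
    rintro _ ⟨⟨j, rfl⟩, hj⟩
    exact Finset.mem_image.2 ⟨j, Finset.mem_erase.2 ⟨by rintro rfl; exact hj rfl, by simp⟩, rfl⟩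
  calc minGen G ≤ _ := minGen_le_card hgen
    _ ≤ (Finset.univ.erase i).card := Finset.card_image_le
    _ < n := by simp [Finset.card_erase_of_mem, i.pos]

theorem partialClosure_succ {d : ℕ} (x : Fin d → G) (i : Fin d) :
    partialClosure x i.succ = partialClosure x i.castSucc ⊔ zpowers (x i) := by
  have : {j : Fin d | (j : ℕ) < i.succ} = insert i {j : Fin d | (j : ℕ) < i.castSucc} := by
    ext j
    simp [le_iff_eq_or_lt, Fin.val_inj]
  rw [partialClosure, partialClosure, this, Set.image_insert_eq, Set.insert_eq,
    Subgroup.closure_union, ← zpowers_eq_closure, sup_comm]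

theorem partialClosure_last {d : ℕ} (x : Fin d → G) :
    partialClosure x (Fin.last d) = closure (Set.range x) := by
  simp [partialClosure]

theorem partialClosure_snoc_castSucc {n : ℕ} (x : Fin n → G) (a : G) (i : Fin (n + 1)) :
    partialClosure (Fin.snoc x a : Fin (n + 1) → G) i.castSucc = partialClosure x i := by
  have : {j : Fin (n + 1) | (j : ℕ) < i.castSucc} = Fin.castSucc '' {j | (j : ℕ) < i} := by
    ext j
    refine Fin.lastCases ?_ (fun j => ?_) j
    · simp [Fin.le_last]
    · simp only [Set.mem_ofPred_eq, Fin.val_castSucc, Set.mem_image, Fin.castSucc_inj,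
        exists_eq_right]
  rw [partialClosure, partialClosure, this, Set.image_image]
  simp

theorem strictMono_partialClosure_iff {d : ℕ} (x : Fin d → G) :
    StrictMono (partialClosure x) ↔ ∀ i, x i ∉ partialClosure x i.castSucc := by
  simp only [Fin.strictMono_iff_lt_succ, partialClosure_succ, left_lt_sup, zpowers_le]

theorem StrictMono.partialClosure_snoc {n : ℕ} {x : Fin n → G} {a : G}
    (hx : StrictMono (partialClosure x)) (ha : a ∉ closure (Set.range x)) :
    StrictMono (partialClosure (Fin.snoc x a : Fin (n + 1) → G)) := by
  rw [strictMono_partialClosure_iff] at hx ⊢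
  intro i
  refine Fin.lastCases ?_ (fun j => ?_) i
  · rwa [Fin.snoc_last, partialClosure_snoc_castSucc, partialClosure_last]
  · rw [Fin.snoc_castSucc, partialClosure_snoc_castSucc]
    exact hx j

theorem exists_strictMono_partialClosure_of_lt_minGen {g : G} (hg : g ≠ 1) :
    ∀ {n : ℕ}, n < minGen G → ∃ x : Fin (n + 1) → G, x 0 = g ∧ StrictMono (partialClosure x)
  | 0, _ => by
    refine ⟨![g], rfl, (strictMono_partialClosure_iff _).2 fun i => ?_⟩
    fin_cases i
    simpa [partialClosure] using hg
  | n + 1, hn => by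
    obtain ⟨x, hx0, hx⟩ := exists_strictMono_partialClosure_of_lt_minGen hg (n := n) (by omega)
    obtain ⟨a, ha⟩ : ∃ a, a ∉ closure (Set.range x) := by
      by_contra! h
      have := minGen_le_of_closure_range_eq_top ((eq_top_iff' _).2 h)
      omega
    exact ⟨Fin.snoc x a, by simpa using hx0, hx.partialClosure_snoc ha⟩

end

/-- a finite uniformly generated group has trivial Frattini subgroup. -/
theorem frattini_eq_bot_of_uniformlyGenerated (G : Type*) [Group G] [Finite G]
    (hG : UniformlyGenerated G) : frattini G = ⊥ := by
  refine (eq_bot_iff_forall _).2 fun g hg => by_contra fun hg1 => ?_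
  have : Nontrivial G := nontrivial_of_ne g 1 hg1
  obtain ⟨n, hn⟩ := Nat.exists_eq_add_one_of_ne_zero (minGen_pos (G := G)).ne'
  obtain ⟨x, hx0, hx⟩ := exists_strictMono_partialClosure_of_lt_minGen hg1 (n := n) (by omega)
  rw [UniformlyGenerated, hn] at hG
  exact (minGen_lt_of_mem_frattini (hG.2 x hx) 0 (hx0 ▸ hg)).ne hn
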